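/- Let V be a symmetric positive definite real d×d matrix, let c > 0, and let L : ℝ^d → ℝ be differentiable with gradient ∇L satisfying the V-strong monotonicity condition ⟨∇L(θ₁) − ∇L(θ₂), θ₁ − θ₂⟩ ≥ c·‖θ₁ − θ₂‖_V² for all θ₁, θ₂ ∈ ℝ^d. If θ̂ ∈ ℝ^d satisfies ∇L(θ̂) = 0, then for every θ* ∈ ℝ^d, ‖θ̂ − θ*‖_V ≤ (1/c)·‖∇L(θ*)‖_{V⁻¹}. -/

import Mathlib

/-!
Put `N = ‖θ̂ - θ*‖_V`. Strong monotonicity between `θ̂` and `θ*`, together with `∇L(θ̂) = 0`, gives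
`c N² ≤ ⟨-∇L(θ*), θ̂ - θ*⟩`, and Cauchy–Schwarz for the `V`-inner product bounds the right-hand
side by `‖∇L(θ*)‖_{V⁻¹} N`; dividing by `c N` yields the claim.
-/

/-- Euclidean dot product on `ℝ^d`. -/
def dotp {d : ℕ} (v w : Fin d → ℝ) : ℝ := ∑ i, v i * w i

/-- The Mahalanobis-type norm `‖u‖_V = √(uᵀ V u)` associated with a matrix `V`. -/
noncomputable def normV {d : ℕ} (V : Matrix (Fin d) (Fin d) ℝ) (u : Fin d → ℝ) : ℝ :=
  Real.sqrt (dotp u (V.mulVec u))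

open Matrix

section
variable {n : Type*} [Fintype n]

theorem Matrix.PosSemidef.dotProduct_mulVec_sq_le {M : Matrix n n ℝ}
    (hM : M.PosSemidef) (x y : n → ℝ) :
    (x ⬝ᵥ M *ᵥ y) ^ 2 ≤ (x ⬝ᵥ M *ᵥ x) * (y ⬝ᵥ M *ᵥ y) := by
  let := M.toSeminormedAddCommGroup hM
  let := M.toInnerProductSpace hM
  have hinner (a b : n → ℝ) : inner ℝ a b = a ⬝ᵥ M *ᵥ b := by
    change (M *ᵥ b) ⬝ᵥ star a = _
    rw [star_trivial, dotProduct_comm]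
  simpa only [hinner, sq] using real_inner_mul_inner_self_le x y

theorem Matrix.IsSymm.dotProduct_mulVec_comm {M : Matrix n n ℝ} (hM : M.IsSymm) (x y : n → ℝ) :
    x ⬝ᵥ M *ᵥ y = y ⬝ᵥ M *ᵥ x := by
  rw [dotProduct_mulVec, ← mulVec_transpose, hM.eq, dotProduct_comm]

theorem Matrix.PosDef.dotProduct_sq_le [DecidableEq n] {V : Matrix n n ℝ} (hV : V.PosDef)
    (w u : n → ℝ) : (w ⬝ᵥ u) ^ 2 ≤ (w ⬝ᵥ V⁻¹ *ᵥ w) * (u ⬝ᵥ V *ᵥ u) := by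
  have hsymm : V.IsSymm := by simpa [IsHermitian, IsSymm] using hV.isHermitian
  have hw : V *ᵥ V⁻¹ *ᵥ w = w := by
    rw [mulVec_mulVec, mul_nonsing_inv _ ((isUnit_iff_isUnit_det V).mp hV.isUnit), one_mulVec]
  -- `w ⬝ᵥ u` is the `V`-inner product of `V⁻¹ w` and `u`
  have key := hV.posSemidef.dotProduct_mulVec_sq_le (V⁻¹ *ᵥ w) u
  rwa [hsymm.dotProduct_mulVec_comm (V⁻¹ *ᵥ w) u, hw, dotProduct_comm u w,
    dotProduct_comm (V⁻¹ *ᵥ w) w] at key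

end

theorem dotp_eq_dotProduct {d : ℕ} (v w : Fin d → ℝ) : dotp v w = v ⬝ᵥ w := rfl

theorem dotp_le_normV_inv_mul_normV {d : ℕ} {V : Matrix (Fin d) (Fin d) ℝ} (hV : V.PosDef)
    (w u : Fin d → ℝ) : dotp w u ≤ normV V⁻¹ w * normV V u := by
  have hw : 0 ≤ w ⬝ᵥ V⁻¹ *ᵥ w := by simpa using hV.inv.posSemidef.dotProduct_mulVec_nonneg w
  rw [normV, normV, dotp_eq_dotProduct, dotp_eq_dotProduct, dotp_eq_dotProduct,
    ← Real.sqrt_mul hw]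
  exact (le_abs_self _).trans (Real.abs_le_sqrt (hV.dotProduct_sq_le w u))

theorem normV_nonneg {d : ℕ} (V : Matrix (Fin d) (Fin d) ℝ) (u : Fin d → ℝ) : 0 ≤ normV V u :=
  Real.sqrt_nonneg _

theorem normV_neg {d : ℕ} (V : Matrix (Fin d) (Fin d) ℝ) (u : Fin d → ℝ) :
    normV V (-u) = normV V u := by
  simp [normV, dotp, mulVec_neg]

theorem mle_estimation_error_bound_general
    (d : ℕ) (V : Matrix (Fin d) (Fin d) ℝ) (hV : V.PosDef)
    (c : ℝ) (hc : 0 < c)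
    (g : (Fin d → ℝ) → Fin d → ℝ)
    (hmono : ∀ θ₁ θ₂ : Fin d → ℝ,
      c * (normV V (θ₁ - θ₂)) ^ 2 ≤ dotp (g θ₁ - g θ₂) (θ₁ - θ₂))
    (θhat θstar : Fin d → ℝ) (hcrit : g θhat = 0) :
    normV V (θhat - θstar) ≤ (1 / c) * normV V⁻¹ (g θstar) := by
  set N := normV V (θhat - θstar)
  have key : c * N ^ 2 ≤ normV V⁻¹ (g θstar) * N :=
    calc c * N ^ 2 ≤ dotp (-g θstar) (θhat - θstar) := by
          simpa [hcrit] using hmono θhat θstar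
      _ ≤ normV V⁻¹ (-g θstar) * N := dotp_le_normV_inv_mul_normV hV _ _
      _ = normV V⁻¹ (g θstar) * N := by rw [normV_neg]
  rw [one_div_mul_eq_div, le_div_iff₀' hc]
  rcases (show 0 ≤ N from normV_nonneg _ _).eq_or_lt with hzero | hpos
  · rw [← hzero, mul_zero]
    exact normV_nonneg _ _
  · exact le_of_mul_le_mul_right (by rwa [mul_assoc, ← sq]) hpos

/-- Estimation-error bound for the regularized MLE: if `L` is differentiable with
gradient `g` satisfying the `V`-strong monotonicity condition
`⟨g(θ₁) − g(θ₂), θ₁ − θ₂⟩ ≥ c·‖θ₁ − θ₂‖_V²`, and `θ̂` is a critical point of `L`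
(`g(θ̂) = 0`), then `‖θ̂ − θ*‖_V ≤ (1/c)·‖g(θ*)‖_{V⁻¹}` for every `θ*`. -/
theorem mle_estimation_error_bound
    (d : ℕ) (V : Matrix (Fin d) (Fin d) ℝ) (hV : V.PosDef)
    (c : ℝ) (hc : 0 < c)
    (L : (Fin d → ℝ) → ℝ) (g : (Fin d → ℝ) → Fin d → ℝ)
    (hdiff : Differentiable ℝ L)
    (hgrad : ∀ θ u : Fin d → ℝ, fderiv ℝ L θ u = dotp (g θ) u)
    (hmono : ∀ θ₁ θ₂ : Fin d → ℝ,
      c * (normV V (θ₁ - θ₂)) ^ 2 ≤ dotp (g θ₁ - g θ₂) (θ₁ - θ₂))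
    (θhat θstar : Fin d → ℝ) (hcrit : g θhat = 0) :
    normV V (θhat - θstar) ≤ (1 / c) * normV V⁻¹ (g θstar) :=
  mle_estimation_error_bound_general d V hV c hc g hmono θhat θstar hcrit
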